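/- Let S be a semidomain. If the Laurent polynomial semidomain S[x^{±1}] is atomic, then S is atomic and every indecomposable polynomial in S[x] has a maximal common divisor of its set of nonzero coefficients. -/

import Mathlib

open Polynomial

/-- A witness that the commutative semiring `S` embeds into an integral domain. -/
structure SemidomainWitness (S : Type) [CommSemiring S] : Type 1 where
  R : Type
  [commRing : CommRing R]
  [isDomain : IsDomain R]
  f : S →+* R
  inj : Function.Injective f

/-- A semidomain is a commutative semiring that embeds into an integral domain. -/
def IsSemidomain (S : Type) [CommSemiring S] : Prop :=
  Nonempty (SemidomainWitness S)


/-- A commutative monoid with zero is atomic if every nonzero nonunit is a finite product of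
irreducible elements. -/
def Atomic (M : Type) [CommMonoidWithZero M] : Prop :=
  ∀ a : M, a ≠ 0 → ¬ IsUnit a → ∃ l : Multiset M, (∀ b ∈ l, Irreducible b) ∧ l.prod = a

/-- A nonzero polynomial is indecomposable if it is not a product of two non-constant
polynomials. -/
def Indecomposable {S : Type} [CommSemiring S] (f : Polynomial S) : Prop :=
  f ≠ 0 ∧ ¬ ∃ g h : Polynomial S, 0 < g.natDegree ∧ 0 < h.natDegree ∧ f = g * h

/-- `d` is a maximal common divisor of the set `T`: `d` is a common divisor of `T` and every
greatest common divisor of the set of quotients `T/d` is a unit.  (Here `g` is a gcd of `T/d`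
iff `d*g` divides every element of `T` and every `e` with `d*e` dividing every element of `T`
divides `g`.) -/
def IsMCD {S : Type} [CommSemiring S] (d : S) (T : Set S) : Prop :=
  (∀ t ∈ T, d ∣ t) ∧
    ∀ g : S, ((∀ t ∈ T, d * g ∣ t) ∧ ∀ e : S, (∀ t ∈ T, d * e ∣ t) → e ∣ g) → IsUnit g

/-!
Over a semidomain `S` every nonzero Laurent polynomial is `T z * p` for a unique `p ∈ S[X]` with
`p(0) ≠ 0`, and such a `p` is a unit of `S[T;T⁻¹]` only if it is a unit of `S[X]`. So a
factorization of `p` into irreducibles of `S[T;T⁻¹]` yields, after discarding powers of `T`, a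
factorization `p = q₁ ⋯ qₙ` in `S[X]` with every `qᵢ` irreducible in `S[T;T⁻¹]`. For a constant
`p = a` all `qᵢ` are constants irreducible in `S`. For an indecomposable `f` other than `c Xᵏ`,
exactly one `qᵢ` is nonconstant, so `f = d q` with `q` irreducible in `S[T;T⁻¹]`, hence primitive,
and then `d` is a maximal common divisor of the coefficients of `f`.
-/

open LaurentPolynomial (T)
open scoped LaurentPolynomial

theorem IsSemidomain.isDomain {S : Type} [CommSemiring S] (hS : IsSemidomain S) : IsDomain S := by
  obtain ⟨w⟩ := hS
  let := w.commRing
  have := w.isDomain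
  exact w.inj.isDomain w.f

theorem Polynomial.exists_eq_X_pow_mul_of_ne_zero {R : Type*} [Semiring R] {p : R[X]}
    (hp : p ≠ 0) : ∃ (k : ℕ) (q : R[X]), p = X ^ k * q ∧ q.coeff 0 ≠ 0 := by
  obtain ⟨n, hn⟩ : ∃ n, n = p.natTrailingDegree := ⟨_, rfl⟩
  obtain ⟨q, hq⟩ : X ^ n ∣ p :=
    X_pow_dvd_iff.mpr fun _ hd => coeff_eq_zero_of_lt_natTrailingDegree (hn ▸ hd)
  refine ⟨n, q, hq, ?_⟩
  have hcoeff : q.coeff 0 = p.trailingCoeff := by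
    rw [trailingCoeff, ← hn, hq, ← coeff_X_pow_mul q n 0, zero_add]
  rwa [hcoeff, trailingCoeff_nonzero_iff_nonzero]

namespace LaurentPolynomial

section

variable {R : Type*} [CommSemiring R]

theorem exists_eq_T_mul_toLaurent {f : R[T;T⁻¹]} (hf : f ≠ 0) :
    ∃ (z : ℤ) (p : R[X]), f = T z * toLaurent p ∧ p.coeff 0 ≠ 0 := by
  obtain ⟨n, f', hf'⟩ := f.exists_T_pow
  have hf'0 : f' ≠ 0 := by
    rintro rfl
    exact hf ((isUnit_T (n : ℤ)).mul_left_eq_zero.mp (by rw [← hf', map_zero]))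
  obtain ⟨k, p, rfl, hp⟩ := exists_eq_X_pow_mul_of_ne_zero hf'0
  refine ⟨k - n, p, ?_, hp⟩
  have hf : f = toLaurent (X ^ k * p) * T (-n) := by
    rw [hf', mul_assoc, ← T_add, add_neg_cancel, T_zero, mul_one]
  rw [hf, map_mul, toLaurent_X_pow, sub_eq_add_neg, T_add]
  ring

theorem eq_of_T_mul_toLaurent_eq {z w : ℤ} {p q : R[X]} (hp : p.coeff 0 ≠ 0)
    (hq : q.coeff 0 ≠ 0) (h : T z * toLaurent p = T w * toLaurent q) : p = q := by
  wlog hzw : z ≤ w generalizing z w p q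
  · exact (this hq hp h.symm (le_of_not_ge hzw)).symm
  obtain ⟨k, rfl⟩ : ∃ k : ℕ, w = z + k := ⟨(w - z).toNat, by omega⟩
  rw [T_add, mul_assoc, ← toLaurent_X_pow, ← map_mul] at h
  have hpk : p = X ^ k * q := toLaurent_injective ((isUnit_T z).mul_left_cancel h)
  cases k with
  | zero => simpa using hpk
  | succ k => exact absurd (by simp [hpk]) hp

variable [IsDomain R]

theorem isUnit_of_isUnit_toLaurent {p : R[X]} (hp : p.coeff 0 ≠ 0)
    (hu : IsUnit (toLaurent p)) : IsUnit p := by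
  obtain ⟨v, hv⟩ := hu.exists_right_inv
  obtain ⟨z, q, rfl, hq⟩ := exists_eq_T_mul_toLaurent (right_ne_zero_of_mul_eq_one hv)
  have hpq : T z * toLaurent (p * q) = T 0 * toLaurent 1 := by
    rw [T_zero, one_mul, map_one, ← hv, map_mul]
    ring
  refine IsUnit.of_mul_eq_one q (eq_of_T_mul_toLaurent_eq ?_ (by simp) hpq)
  rw [mul_coeff_zero]
  exact mul_ne_zero hp hq

instance isLocalHom_C : IsLocalHom (C : R →+* R[T;T⁻¹]) where
  map_nonunit c hc := by
    have hc0 : c ≠ 0 := by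
      rintro rfl
      exact not_isUnit_zero (M₀ := R[T;T⁻¹]) (by rwa [map_zero] at hc)
    rw [← toLaurent_C] at hc
    exact isUnit_C.mp (isUnit_of_isUnit_toLaurent (by simpa using hc0) hc)

theorem exists_prod_eq_of_prod_eq_T_mul_toLaurent {l : Multiset R[T;T⁻¹]}
    (hl : ∀ b ∈ l, Irreducible b) {z : ℤ} {f : R[X]} (hf : f.coeff 0 ≠ 0)
    (h : l.prod = T z * toLaurent f) :
    ∃ m : Multiset R[X], m.prod = f ∧ ∀ q ∈ m, Irreducible (toLaurent q) := by
  induction l using Multiset.induction_on generalizing z f with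
  | empty =>
    refine ⟨0, ?_, by simp⟩
    rw [Multiset.prod_zero] at h ⊢
    exact eq_of_T_mul_toLaurent_eq (z := 0) (by simp) hf (by simpa using h)
  | cons b l ih =>
    rw [Multiset.prod_cons] at h
    have hne : b * l.prod ≠ 0 :=
      h ▸ mul_ne_zero (isUnit_T z).ne_zero (toLaurent_ne_zero.mpr (by rintro rfl; simp at hf))
    obtain ⟨u, q, rfl, hq⟩ := exists_eq_T_mul_toLaurent (left_ne_zero_of_mul hne)
    obtain ⟨v, F, hF, hF0⟩ := exists_eq_T_mul_toLaurent (right_ne_zero_of_mul hne)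
    have hqF : q * F = f := by
      refine eq_of_T_mul_toLaurent_eq (z := u + v) (w := z) ?_ hf ?_
      · rw [mul_coeff_zero]
        exact mul_ne_zero hq hF0
      · rw [← h, hF, T_add, map_mul]
        ring
    obtain ⟨m, rfl, hm⟩ := ih (fun b hb => hl b (Multiset.mem_cons_of_mem hb)) hF0 hF
    refine ⟨q ::ₘ m, by rw [Multiset.prod_cons, hqF], ?_⟩
    simp only [Multiset.mem_cons, forall_eq_or_imp]
    exact ⟨(irreducible_isUnit_mul (isUnit_T u)).mp (hl _ (Multiset.mem_cons_self _ _)), hm⟩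

theorem isPrimitive_of_irreducible_toLaurent {q : R[X]} (hq0 : q.coeff 0 ≠ 0)
    (hdeg : 0 < q.natDegree) (hirr : Irreducible (toLaurent q)) : q.IsPrimitive := by
  rintro g ⟨q', rfl⟩
  rw [map_mul, toLaurent_C] at hirr
  refine (hirr.isUnit_or_isUnit rfl).elim (IsUnit.of_map C g) fun hu => absurd hdeg ?_
  rw [mul_coeff_zero] at hq0
  have hq' : q'.natDegree = 0 := natDegree_eq_zero_of_isUnit
    (isUnit_of_isUnit_toLaurent (right_ne_zero_of_mul hq0) hu)
  exact (natDegree_C_mul_le g q').trans_eq hq' |>.not_gt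

end

theorem atomic_of_atomic {R : Type} [CommSemiring R] [IsDomain R] (h : Atomic R[T;T⁻¹]) :
    Atomic R := by
  intro a ha hu
  obtain ⟨l, hl, hprod⟩ :=
    h (C a) (by simpa [← toLaurent_C] using ha) (mt (IsUnit.of_map C a) hu)
  obtain ⟨m, hm, hirr⟩ := exists_prod_eq_of_prod_eq_T_mul_toLaurent hl (z := 0)
    (f := Polynomial.C a) (by simpa using ha) (by rw [hprod, T_zero, one_mul, toLaurent_C])
  have hconst : ∀ q ∈ m, q = Polynomial.C (q.coeff 0) := fun q hq =>
    eq_C_of_natDegree_eq_zero <| Nat.eq_zero_of_le_zero <|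
      natDegree_C a ▸ natDegree_le_of_dvd (hm ▸ Multiset.dvd_prod hq) (by simpa using ha)
  refine ⟨m.map (coeff · 0), ?_, by rw [← coeff_zero_multiset_prod, hm, coeff_C_zero]⟩
  simp only [Multiset.mem_map, forall_exists_index, and_imp, forall_apply_eq_imp_iff₂]
  intro q hq
  have hq' := hirr q hq
  rw [hconst q hq, toLaurent_C] at hq'
  exact hq'.of_map

end LaurentPolynomial

section Indecomposable

variable {R : Type} [CommSemiring R]

theorem isMCD_coeffs_C_mul [IsDomain R] {d : R} {q : R[X]} (hd : d ≠ 0) (hq : q.IsPrimitive) :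
    IsMCD d {a | a ≠ 0 ∧ ∃ i, (C d * q).coeff i = a} := by
  refine ⟨?_, fun g ⟨hg, _⟩ => hq g ((C_dvd_iff_dvd_coeff g q).mpr fun i => ?_)⟩
  · rintro _ ⟨-, i, rfl⟩
    rw [coeff_C_mul]
    exact dvd_mul_right d _
  · by_cases hi : q.coeff i = 0
    · rw [hi]
      exact dvd_zero g
    · exact (mul_dvd_mul_iff_left hd).mp (hg _ ⟨mul_ne_zero hd hi, i, coeff_C_mul _⟩)

theorem Indecomposable.exists_eq_C_mul_of_multiset_prod_eq {f : R[X]} (hf : Indecomposable f)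
    (hdeg : 0 < f.natDegree) {m : Multiset R[X]} (hm : m.prod = f) :
    ∃ d : R, ∃ q ∈ m, f = C d * q := by
  obtain ⟨q, hqm, hq⟩ : ∃ q ∈ m, 0 < q.natDegree := by
    by_contra! h
    have := natDegree_multiset_prod_le m
    rw [Multiset.sum_eq_zero (by simpa using fun q hq => Nat.le_zero.mp (h q hq)), hm] at this
    omega
  obtain ⟨m', rfl⟩ := Multiset.exists_cons_of_mem hqm
  rw [Multiset.prod_cons] at hm
  have hrest : m'.prod.natDegree = 0 := by
    by_contra hpos
    exact hf.2 ⟨q, m'.prod, hq, Nat.pos_of_ne_zero hpos, hm.symm⟩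
  refine ⟨m'.prod.coeff 0, q, Multiset.mem_cons_self q m', ?_⟩
  rw [← hm, ← eq_C_of_natDegree_eq_zero hrest, mul_comm]

open LaurentPolynomial (isUnit_of_isUnit_toLaurent exists_prod_eq_of_prod_eq_T_mul_toLaurent
  isPrimitive_of_irreducible_toLaurent) in
theorem Indecomposable.exists_isMCD_coeffs [IsDomain R] (h : Atomic R[T;T⁻¹]) {f : R[X]}
    (hf : Indecomposable f) : ∃ d : R, IsMCD d {a | a ≠ 0 ∧ ∃ i, f.coeff i = a} := by
  obtain ⟨k, p, rfl, hp0⟩ := exists_eq_X_pow_mul_of_ne_zero hf.1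
  by_cases hpdeg : p.natDegree = 0
  · refine ⟨p.coeff 0, ?_⟩
    rw [eq_C_of_natDegree_eq_zero hpdeg, mul_comm, coeff_C_zero]
    exact isMCD_coeffs_C_mul hp0 (monic_X_pow k).isPrimitive
  have hk : k = 0 := by
    obtain _ | j := k
    · rfl
    refine absurd ⟨X, X ^ j * p, by simp, ?_, by ring⟩ hf.2
    rw [natDegree_mul (pow_ne_zero j X_ne_zero) (by rintro rfl; simp at hp0), natDegree_X_pow]
    omega
  subst hk
  rw [pow_zero, one_mul] at hf ⊢
  obtain ⟨l, hl, hprod⟩ := h (toLaurent p) (toLaurent_ne_zero.mpr hf.1)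
    fun hu => hpdeg (natDegree_eq_zero_of_isUnit (isUnit_of_isUnit_toLaurent hp0 hu))
  obtain ⟨m, hm, hirr⟩ := exists_prod_eq_of_prod_eq_T_mul_toLaurent hl (z := 0) hp0
    (by rw [hprod, LaurentPolynomial.T_zero, one_mul])
  obtain ⟨d, q, hqm, rfl⟩ :=
    hf.exists_eq_C_mul_of_multiset_prod_eq (Nat.pos_of_ne_zero hpdeg) hm
  rw [mul_coeff_zero, coeff_C_zero] at hp0
  have hd : d ≠ 0 := left_ne_zero_of_mul hp0
  rw [natDegree_C_mul hd] at hpdeg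
  exact ⟨d, isMCD_coeffs_C_mul hd <| isPrimitive_of_irreducible_toLaurent
    (right_ne_zero_of_mul hp0) (Nat.pos_of_ne_zero hpdeg) (hirr q hqm)⟩

end Indecomposable

/-- For a semidomain `S`: if the Laurent polynomial semidomain `S[x^{±1}]` is atomic, then `S`
is atomic and the set of nonzero coefficients of every indecomposable polynomial in `S[x]` has a
maximal common divisor. -/
theorem stmt7 (S : Type) [CommSemiring S] (hS : IsSemidomain S)
    (h : Atomic (LaurentPolynomial S)) :
    Atomic S ∧ ∀ f : Polynomial S, Indecomposable f →
      ∃ d : S, IsMCD d {a : S | a ≠ 0 ∧ ∃ i : ℕ, f.coeff i = a} := by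
  have := hS.isDomain
  exact ⟨LaurentPolynomial.atomic_of_atomic h, fun _ hf => hf.exists_isMCD_coeffs h⟩
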